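/- arXiv:1604.02928 — 5 statements merged into one kernel-verified Lean document; each statement's English description precedes it below -/
import Mathlib

section
/- In the functional conic-section model, assume that for all integers p,q ≥ 0 with p+q ≤ 4 the limits μ_{p,q} := lim_{n→∞} (1/n)·Σ_{i=1}^n ξᵢᵖ ηᵢ^q exist and are finite, and assume rank(Ψ̄_∞) = 5. Then βᵀ Ψ̄'_∞ β < 0, where β is the true coefficient vector of the conic. -/
open MeasureTheory ProbabilityTheory Filter Matrix Finset
open scoped BigOperators NNReal Topology RealInnerProductSpace

noncomputable section

namespace TwoLinesPaper

/-- The matrix `ψ(x,y;v)` of generalized Hermite polynomials. -/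
def psiMat (x y v : ℝ) : Matrix (Fin 6) (Fin 6) ℝ :=
  !![x^4 - 6*x^2*v + 3*v^2, (x^3 - 3*x*v)*y,       (x^2 - v)*(y^2 - v),   x^3 - 3*x*v, (x^2 - v)*y, x^2 - v;
     (x^3 - 3*x*v)*y,       (x^2 - v)*(y^2 - v),   x*(y^3 - 3*y*v),       (x^2 - v)*y, x*(y^2 - v), x*y;
     (x^2 - v)*(y^2 - v),   x*(y^3 - 3*y*v),       y^4 - 6*y^2*v + 3*v^2, x*(y^2 - v), y^3 - 3*y*v, y^2 - v;
     x^3 - 3*x*v,           (x^2 - v)*y,           x*(y^2 - v),           x^2 - v,     x*y,         x;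
     (x^2 - v)*y,           x*(y^2 - v),           y^3 - 3*y*v,           x*y,         y^2 - v,     y;
     x^2 - v,               x*y,                   y^2 - v,               x,           y,           1]

/-- Entrywise partial derivative `ψ'_v(x,y;v) = ∂ψ(x,y;v)/∂v`. -/
def psiMatD (x y v : ℝ) : Matrix (Fin 6) (Fin 6) ℝ :=
  Matrix.of fun i j => deriv (fun t => psiMat x y t i j) v

/-- The constant matrix `Ψ'' = ∂²ψ(x,y;v)/∂v²`. -/
def psiDD : Matrix (Fin 6) (Fin 6) ℝ :=
  Matrix.of fun i j => deriv (deriv (fun t => psiMat 0 0 t i j)) 0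

/-- Smallest eigenvalue of a symmetric matrix, as the infimum of the quadratic
form over the Euclidean unit sphere. -/
def lamMin {n : ℕ} (M : Matrix (Fin n) (Fin n) ℝ) : ℝ :=
  sInf {r : ℝ | ∃ u : Fin n → ℝ, ∑ i, u i ^ 2 = 1 ∧ r = u ⬝ᵥ M.mulVec u}

/-- Euclidean norm of a vector. -/
def vnorm {n : ℕ} (u : Fin n → ℝ) : ℝ := Real.sqrt (∑ i, u i ^ 2)

/-- The conic-section equation with coefficient vector `b = (A,2B,C,2D,2E,F)ᵀ`:
`A x² + 2B xy + C y² + 2D x + 2E y + F = 0`. -/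
def conicEq (b : Fin 6 → ℝ) (x y : ℝ) : Prop :=
  b 0 * x^2 + b 1 * (x*y) + b 2 * y^2 + b 3 * x + b 4 * y + b 5 = 0

/-- `Ψₙ(v) = Σ_{i=1}^n ψ(xᵢ,yᵢ;v)` (for possibly random observations). -/
def PsiN {Ω : Type*} (x y : ℕ → Ω → ℝ) (n : ℕ) (v : ℝ) (ω : Ω) : Matrix (Fin 6) (Fin 6) ℝ :=
  ∑ i ∈ Finset.range n, psiMat (x i ω) (y i ω) v

/-- `Ψ'ₙ(v) = dΨₙ(v)/dv`. -/
def PsiND {Ω : Type*} (x y : ℕ → Ω → ℝ) (n : ℕ) (v : ℝ) (ω : Ω) : Matrix (Fin 6) (Fin 6) ℝ :=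
  ∑ i ∈ Finset.range n, psiMatD (x i ω) (y i ω) v

/-- The ALS2 estimator: `σ̂²ₙ ≥ 0` solves `λ_min(Ψₙ(σ̂²ₙ)) = 0` and the nonzero vector
`β̂ₙ` solves `Ψₙ(σ̂²ₙ) β̂ₙ = 0`. -/
def IsALS2 {Ω : Type*} (x y : ℕ → Ω → ℝ) (s2 : ℕ → Ω → ℝ) (bh : ℕ → Ω → Fin 6 → ℝ) : Prop :=
  ∀ n ω, 0 ≤ s2 n ω ∧ lamMin (PsiN x y n (s2 n ω) ω) = 0 ∧
    bh n ω ≠ 0 ∧ (PsiN x y n (s2 n ω) ω).mulVec (bh n ω) = 0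

/-- The normalized ALS2 estimator `β̃ₙ = ±√(−n/(β̂ₙᵀ Ψ'ₙ(σ̂²ₙ) β̂ₙ))·β̂ₙ`, with the
sign chosen so that `βᵀβ̃ₙ ≥ 0`. -/
def normALS {Ω : Type*} (b : Fin 6 → ℝ) (x y : ℕ → Ω → ℝ) (s2 : ℕ → Ω → ℝ)
    (bh : ℕ → Ω → Fin 6 → ℝ) (n : ℕ) (ω : Ω) : Fin 6 → ℝ :=
  let c := Real.sqrt (-(n : ℝ) / (bh n ω ⬝ᵥ (PsiND x y n (s2 n ω) ω).mulVec (bh n ω)))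
  if 0 ≤ b ⬝ᵥ bh n ω then c • bh n ω else -(c • bh n ω)

/-- The measurement errors `(δᵢ,εᵢ)ᵀ`, `i ∈ ℕ`, form an i.i.d. family of
bivariate `N(0, σ²I₂)` Gaussian vectors (equivalently, all the coordinates
`δ₀,ε₀,δ₁,ε₁,…` are independent with law `N(0,σ²)`). -/
def GaussErrors {Ω : Type*} [MeasurableSpace Ω] (μ : Measure Ω)
    (del eps : ℕ → Ω → ℝ) (v : ℝ≥0) : Prop :=
  (∀ i, Measurable (del i)) ∧ (∀ i, Measurable (eps i)) ∧
  iIndepFun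
    (fun p : ℕ × Bool => fun ω => if p.2 then del p.1 ω else eps p.1 ω) μ ∧
  (∀ i, μ.map (del i) = gaussianReal 0 v) ∧ (∀ i, μ.map (eps i) = gaussianReal 0 v)

/-- Functional conic-section model with moment order `m`: the true points are
nonrandom, lie on the conic with coefficient vector `b`, and the Cesàro limits of
all monomials `ξᵢᵖηᵢ^q`, `p+q ≤ m`, exist and are finite. -/
def ConicFunctionalModel {Ω : Type*} (xi eta : ℕ → Ω → ℝ) (b : Fin 6 → ℝ) (m : ℕ) : Prop :=
  (∀ i, ∃ a c : ℝ, xi i = (fun _ => a) ∧ eta i = (fun _ => c)) ∧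
  (∀ i ω, conicEq b (xi i ω) (eta i ω)) ∧
  (∀ p q : ℕ, p + q ≤ m → ∃ c : ℝ, ∀ ω,
    Tendsto (fun n : ℕ => (n : ℝ)⁻¹ * ∑ i ∈ Finset.range n, (xi i ω)^p * (eta i ω)^q)
      atTop (𝓝 c))

/-- Structural conic-section model with moment order `m`: the true points are i.i.d.
random vectors concentrated on the conic with coefficient vector `b`, with finite
`m`-th moments, and the true points are independent of the errors. -/
def ConicStructuralModel {Ω : Type*} [MeasurableSpace Ω] (μ : Measure Ω)
    (xi eta del eps : ℕ → Ω → ℝ) (b : Fin 6 → ℝ) (m : ℕ) : Prop :=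
  (∀ i, Measurable (xi i)) ∧ (∀ i, Measurable (eta i)) ∧
  iIndepFun (fun i => fun ω => (xi i ω, eta i ω)) μ ∧
  (∀ i, IdentDistrib (fun ω => (xi i ω, eta i ω)) (fun ω => (xi 0 ω, eta 0 ω)) μ μ) ∧
  (∀ i, ∀ᵐ ω ∂μ, conicEq b (xi i ω) (eta i ω)) ∧
  Integrable (fun ω => (xi 0 ω)^m) μ ∧ Integrable (fun ω => (eta 0 ω)^m) μ ∧
  IndepFun (fun ω => (fun i => (xi i ω, eta i ω))) (fun ω => (fun i => (del i ω, eps i ω))) μ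

/-- The 7×7 block matrix `[[M, u], [vᵀ, c]]`. -/
def block7 (M : Matrix (Fin 6) (Fin 6) ℝ) (u v : Fin 6 → ℝ) (c : ℝ) :
    Matrix (Fin 7) (Fin 7) ℝ :=
  Matrix.of (Fin.snoc (fun i => Fin.snoc (M i) (u i)) (Fin.snoc v c))

/-- Upper-left 6×6 block of a 7×7 matrix. -/
def ulBlock (M : Matrix (Fin 7) (Fin 7) ℝ) : Matrix (Fin 6) (Fin 6) ℝ :=
  Matrix.of fun i j => M i.castSucc j.castSucc

/-- The vector `sᵢ = (ψ(xᵢ,yᵢ;v) b ; (1/2) bᵀψ(xᵢ,yᵢ;v) b − 1/2)`. -/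
def sVec (xv yv v : ℝ) (b : Fin 6 → ℝ) : Fin 7 → ℝ :=
  Fin.snoc ((psiMat xv yv v).mulVec b)
    ((1/2) * (b ⬝ᵥ (psiMat xv yv v).mulVec b) - 1/2)

/-- The map `betatolines : (A,2B,C,2D,2E,F)ᵀ ↦ (k₁,h₁,k₂,h₂)ᵀ`, with the roots
labelled so that `k₁ ≤ k₂`. -/
def betatolines (b : Fin 6 → ℝ) : Fin 4 → ℝ :=
  let A := b 0; let B := b 1 / 2; let C := b 2; let D := b 3 / 2; let E := b 4 / 2
  let s := Real.sqrt (B^2 - A*C)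
  let k1 := min ((-B - s)/C) ((-B + s)/C)
  let k2 := max ((-B - s)/C) ((-B + s)/C)
  ![k1, 2*(D + k1*E)/(C*(k2 - k1)), k2, 2*(D + k2*E)/(C*(k1 - k2))]

/-- The 4×6 Jacobian matrix of `betatolines` at `b`. -/
def jacB2L (b : Fin 6 → ℝ) : Matrix (Fin 4) (Fin 6) ℝ :=
  Matrix.of fun i j => fderiv ℝ (fun u : Fin 6 → ℝ => betatolines u i) b (Pi.single j 1)

/-- `Δ(β) = ACF + 2BDE − AE² − CD² − B²F` for `β = (A,2B,C,2D,2E,F)ᵀ`. -/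
def DeltaF (b : Fin 6 → ℝ) : ℝ :=
  let A := b 0; let B := b 1 / 2; let C := b 2; let D := b 3 / 2; let E := b 4 / 2; let F := b 5
  A*C*F + 2*B*D*E - A*E^2 - C*D^2 - B^2*F

/-- `Δ'(β) = (CF−E², DE−BF, AF−D², BE−CD, BD−AE, AC−B²)`. -/
def DeltaD (b : Fin 6 → ℝ) : Fin 6 → ℝ :=
  let A := b 0; let B := b 1 / 2; let C := b 2; let D := b 3 / 2; let E := b 4 / 2; let F := b 5
  ![C*F - E^2, D*E - B*F, A*F - D^2, B*E - C*D, B*D - A*E, A*C - B^2]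

/-- The coefficient vector `β = (A,2B,C,2D,2E,F)ᵀ` of the degenerate conic formed by
the two lines `y = k₁x + h₁` and `y = k₂x + h₂`, with common factor `C`. -/
def twoLinesBeta (C k1 h1 k2 h2 : ℝ) : Fin 6 → ℝ :=
  ![C*(k1*k2), -(C*(k1 + k2)), C, C*(k1*h2 + k2*h1), -(C*(h1 + h2)), C*(h1*h2)]

/-- The 3×3 Hankel-type matrix built from `1, x, x², x³, x⁴`. -/
def hankel3 (x : ℝ) : Matrix (Fin 3) (Fin 3) ℝ :=
  !![1, x, x^2; x, x^2, x^3; x^2, x^3, x^4]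

/-- A straight line in `ℝ²`. -/
def IsLine (l : Set (ℝ × ℝ)) : Prop :=
  ∃ a b c : ℝ, (a, b) ≠ (0, 0) ∧ l = {p : ℝ × ℝ | a * p.1 + b * p.2 = c}

/-- Topological support of a measure on `ℝ²`: the set of points all of whose open
neighbourhoods have positive measure. -/
def measSupport (ν : Measure (ℝ × ℝ)) : Set (ℝ × ℝ) :=
  {p | ∀ U : Set (ℝ × ℝ), IsOpen U → p ∈ U → 0 < ν U}

/-- Nonidentifiability condition (a): the support is contained in the union of a
line and a single point. -/
def NonidentLinePoint (ν : Measure (ℝ × ℝ)) : Prop :=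
  ∃ l : Set (ℝ × ℝ), IsLine l ∧ ∃ z : ℝ × ℝ, measSupport ν ⊆ l ∪ {z}

/-- Nonidentifiability condition (b): the support consists of exactly 4 points. -/
def NonidentFourPoints (ν : Measure (ℝ × ℝ)) : Prop :=
  (measSupport ν).ncard = 4 ∧ (measSupport ν).Finite

/-- A measure `ν` on `ℝⁿ` is the centered Gaussian law with covariance matrix `S`:
every linear functional pushes `ν` forward to the corresponding one-dimensional
centered Gaussian law. -/
def IsGaussianLaw {n : ℕ} (ν : Measure (Fin n → ℝ)) (S : Matrix (Fin n) (Fin n) ℝ) : Prop :=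
  IsProbabilityMeasure ν ∧
  ∀ a : Fin n → ℝ, ν.map (fun x => a ⬝ᵥ x) = gaussianReal 0 (Real.toNNReal (a ⬝ᵥ S.mulVec a))

/-- Convergence in distribution (weak convergence of laws). -/
def TendstoInDistrib {Ω E : Type*} [MeasurableSpace Ω] [MeasurableSpace E]
    [TopologicalSpace E] (μ : Measure Ω) (Z : ℕ → Ω → E) (ν : Measure E) : Prop :=
  ∀ f : BoundedContinuousFunction E ℝ,
    Tendsto (fun n => ∫ ω, f (Z n ω) ∂μ) atTop (𝓝 (∫ x, f x ∂ν))

/-- Convergence in probability. -/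
def TendstoInProb {Ω : Type*} [MeasurableSpace Ω] (μ : Measure Ω) {E : Type*}
    [PseudoMetricSpace E] (Z : ℕ → Ω → E) (c : E) : Prop :=
  ∀ ε : ℝ, 0 < ε → Tendsto (fun n => μ {ω | ε ≤ dist (Z n ω) c}) atTop (𝓝 0)

/-! ### Auxiliary lemmas for the proof -/


def psi1 (x y : ℝ) : Matrix (Fin 6) (Fin 6) ℝ :=
  !![-(6*x^2), -(3*(x*y)), -(x^2+y^2), -(3*x), -y, -1;
     -(3*(x*y)), -(x^2+y^2), -(3*(x*y)), -y, -x, 0;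
     -(x^2+y^2), -(3*(x*y)), -(6*y^2), -x, -(3*y), -1;
     -(3*x), -y, -x, -1, 0, 0;
     -y, -x, -(3*y), 0, -1, 0;
     -1, 0, -1, 0, 0, 0]

def psi2 : Matrix (Fin 6) (Fin 6) ℝ :=
  !![3,0,1,0,0,0; 0,1,0,0,0,0; 1,0,3,0,0,0; 0,0,0,0,0,0; 0,0,0,0,0,0; 0,0,0,0,0,0]

lemma cons_val_five' {α : Type*} {m : ℕ} (x : α) (u : Fin (m+1+1+1+1+1) → α) :
    vecCons x u 5 = vecHead (vecTail (vecTail (vecTail (vecTail u)))) := rfl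

set_option maxHeartbeats 2000000 in
lemma psi_entry (x y t : ℝ) (i j : Fin 6) :
    psiMat x y t i j = psiMat x y 0 i j + psi1 x y i j * t + psi2 i j * t^2 := by
  fin_cases i <;> fin_cases j <;>
    simp [psiMat, psi1, psi2, Matrix.cons_val_zero, Matrix.cons_val_one,
      Matrix.cons_val_two, Matrix.cons_val_three, Matrix.cons_val_four, cons_val_five',
      Matrix.head_cons, Matrix.vecHead, Matrix.vecTail] <;> ring

lemma deriv_quad (a b c : ℝ) : deriv (fun t : ℝ => a + b * t + c * t^2) 0 = b := by
  have h1 : HasDerivAt (fun t : ℝ => b * t) b 0 := by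
    simpa using (hasDerivAt_id (0:ℝ)).const_mul b
  have h2 : HasDerivAt (fun t : ℝ => c * t^2) (c * (2 * 0^1)) 0 :=
    (hasDerivAt_pow 2 0).const_mul c
  have h := ((hasDerivAt_const (0:ℝ) a).add h1).add h2
  rw [show (fun t : ℝ => a + b * t + c * t^2) = ((fun _ => a) + fun t => b * t) + fun t => c * t^2 from rfl, h.deriv]
  simp

lemma psiMatD_zero (x y : ℝ) : psiMatD x y 0 = psi1 x y := by
  ext i j
  have : (fun t => psiMat x y t i j)
      = fun t => psiMat x y 0 i j + psi1 x y i j * t + psi2 i j * t^2 :=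
    funext fun t => psi_entry x y t i j
  simp only [psiMatD, Matrix.of_apply, this, deriv_quad]

set_option maxHeartbeats 1000000 in
lemma psi_symm (x y v : ℝ) (i j : Fin 6) : psiMat x y v i j = psiMat x y v j i := by
  fin_cases i <;> fin_cases j <;>
    simp [psiMat, Matrix.cons_val_zero, Matrix.cons_val_one,
      Matrix.cons_val_two, Matrix.cons_val_three, Matrix.cons_val_four, cons_val_five',
      Matrix.head_cons, Matrix.vecHead, Matrix.vecTail] <;> ring

set_option maxHeartbeats 1000000 in
lemma quad0 (x y : ℝ) (u : Fin 6 → ℝ) :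
    u ⬝ᵥ (psiMat x y 0).mulVec u
      = (u 0 * x^2 + u 1 * (x*y) + u 2 * y^2 + u 3 * x + u 4 * y + u 5)^2 := by
  simp [dotProduct, Matrix.mulVec, Fin.sum_univ_six, psiMat,
    Matrix.cons_val_zero, Matrix.cons_val_one,
    Matrix.cons_val_two, Matrix.cons_val_three, Matrix.cons_val_four, cons_val_five',
    Matrix.head_cons, Matrix.vecHead, Matrix.vecTail]
  ring

set_option maxHeartbeats 1000000 in
lemma quad1 (x y : ℝ) (b : Fin 6 → ℝ) (h : conicEq b x y) :
    b ⬝ᵥ (psi1 x y).mulVec b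
      = -((2*b 0*x + b 1*y + b 3)^2 + (b 1*x + 2*b 2*y + b 4)^2) := by
  have h' : b 0 * x^2 + b 1 * (x*y) + b 2 * y^2 + b 3 * x + b 4 * y + b 5 = 0 := h
  simp [dotProduct, Matrix.mulVec, Fin.sum_univ_six, psi1,
    Matrix.cons_val_zero, Matrix.cons_val_one,
    Matrix.cons_val_two, Matrix.cons_val_three, Matrix.cons_val_four, cons_val_five',
    Matrix.head_cons, Matrix.vecHead, Matrix.vecTail]
  linear_combination (-2*(b 0 + b 2)) * h'

lemma sum_mulVec' (s : Finset ℕ) (M : ℕ → Matrix (Fin 6) (Fin 6) ℝ) (u : Fin 6 → ℝ) :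
    (∑ i ∈ s, M i).mulVec u = ∑ i ∈ s, (M i).mulVec u := by
  induction s using Finset.cons_induction with
  | empty => simp [Matrix.zero_mulVec]
  | cons a s ha ih => rw [Finset.sum_cons, Finset.sum_cons, Matrix.add_mulVec, ih]

lemma dot_sum' (s : Finset ℕ) (v : ℕ → Fin 6 → ℝ) (u : Fin 6 → ℝ) :
    u ⬝ᵥ (∑ i ∈ s, v i) = ∑ i ∈ s, u ⬝ᵥ v i := by
  induction s using Finset.cons_induction with
  | empty => simp
  | cons a s ha ih => rw [Finset.sum_cons, Finset.sum_cons, dotProduct_add, ih]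

lemma quadform_sum (u : Fin 6 → ℝ) (a : ℝ) (s : Finset ℕ)
    (M : ℕ → Matrix (Fin 6) (Fin 6) ℝ) :
    u ⬝ᵥ (a • ∑ i ∈ s, M i).mulVec u = a * ∑ i ∈ s, u ⬝ᵥ (M i).mulVec u := by
  rw [Matrix.smul_mulVec, dotProduct_smul, sum_mulVec', dot_sum', smul_eq_mul]

lemma quadform_cont (u : Fin 6 → ℝ) :
    Continuous fun M : Matrix (Fin 6) (Fin 6) ℝ => u ⬝ᵥ M.mulVec u := by
  simp only [dotProduct, Matrix.mulVec]
  exact continuous_finset_sum _ fun i _ =>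
    (continuous_const.mul (continuous_finset_sum _ fun j _ =>
      (by fun_prop : Continuous fun M : Matrix (Fin 6) (Fin 6) ℝ => M i j * u j)))


end TwoLinesPaper

open TwoLinesPaper
/-- in the functional conic-section model, `βᵀ Ψ̄'_∞ β < 0`. -/
theorem beta_dPsiInf_beta_neg
    (xi eta : ℕ → ℝ) (b : Fin 6 → ℝ) (hb : b ≠ 0)
    (hconic : ∀ i, conicEq b (xi i) (eta i))
    (hmom : ∀ p q : ℕ, p + q ≤ 4 → ∃ c : ℝ,
      Tendsto (fun n : ℕ => (n : ℝ)⁻¹ * ∑ i ∈ Finset.range n, (xi i)^p * (eta i)^q)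
        atTop (𝓝 c))
    (PsiInf PsiInfD : Matrix (Fin 6) (Fin 6) ℝ)
    (hPsiInf : Tendsto
      (fun n : ℕ => (n : ℝ)⁻¹ • ∑ i ∈ Finset.range n, psiMat (xi i) (eta i) 0)
      atTop (𝓝 PsiInf))
    (hPsiInfD : Tendsto
      (fun n : ℕ => (n : ℝ)⁻¹ • ∑ i ∈ Finset.range n, psiMatD (xi i) (eta i) 0)
      atTop (𝓝 PsiInfD))
    (hrank : PsiInf.rank = 5) :
    b ⬝ᵥ PsiInfD.mulVec b < 0 := by
  classical
  set c : Fin 6 → ℝ := ![0, 0, 0, 2 * b 0, b 1, b 3] with hcdef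
  set d : Fin 6 → ℝ := ![0, 0, 0, b 1, 2 * b 2, b 4] with hddef
  -- quadratic forms of the Cesàro averages converge
  have hseq : ∀ u : Fin 6 → ℝ, Tendsto
      (fun n : ℕ => (n : ℝ)⁻¹ * ∑ i ∈ Finset.range n,
        u ⬝ᵥ (psiMat (xi i) (eta i) 0).mulVec u) atTop (𝓝 (u ⬝ᵥ PsiInf.mulVec u)) := by
    intro u
    have h := ((quadform_cont u).tendsto PsiInf).comp hPsiInf
    simpa only [Function.comp_def, quadform_sum] using h
  have hseqD : Tendsto
      (fun n : ℕ => (n : ℝ)⁻¹ * ∑ i ∈ Finset.range n,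
        b ⬝ᵥ (psiMatD (xi i) (eta i) 0).mulVec b) atTop (𝓝 (b ⬝ᵥ PsiInfD.mulVec b)) := by
    have h := ((quadform_cont b).tendsto PsiInfD).comp hPsiInfD
    simpa only [Function.comp_def, quadform_sum] using h
  -- b is in the kernel direction: quadratic form of b vanishes
  have hQb : b ⬝ᵥ PsiInf.mulVec b = 0 := by
    refine tendsto_nhds_unique (hseq b) ?_
    have hz : (fun n : ℕ => (n : ℝ)⁻¹ * ∑ i ∈ Finset.range n,
        b ⬝ᵥ (psiMat (xi i) (eta i) 0).mulVec b) = fun _ => (0:ℝ) := by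
      funext n
      rw [Finset.sum_eq_zero, mul_zero]
      intro i _
      rw [quad0]
      have hP : b 0 * (xi i)^2 + b 1 * (xi i * eta i) + b 2 * (eta i)^2
          + b 3 * xi i + b 4 * eta i + b 5 = 0 := hconic i
      rw [hP]; norm_num
    rw [hz]; exact tendsto_const_nhds
  -- limits of the gradient-square averages
  have hQc : Tendsto (fun n : ℕ => (n : ℝ)⁻¹ * ∑ i ∈ Finset.range n,
      (2 * b 0 * xi i + b 1 * eta i + b 3)^2) atTop (𝓝 (c ⬝ᵥ PsiInf.mulVec c)) := by
    refine (hseq c).congr fun n => ?_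
    congr 1
    refine Finset.sum_congr rfl fun i _ => ?_
    rw [quad0]
    simp [hcdef, Matrix.cons_val_zero, Matrix.cons_val_one, Matrix.cons_val_two,
      Matrix.cons_val_three, Matrix.cons_val_four, cons_val_five',
      Matrix.head_cons, Matrix.vecHead, Matrix.vecTail]
  have hQd : Tendsto (fun n : ℕ => (n : ℝ)⁻¹ * ∑ i ∈ Finset.range n,
      (b 1 * xi i + 2 * b 2 * eta i + b 4)^2) atTop (𝓝 (d ⬝ᵥ PsiInf.mulVec d)) := by
    refine (hseq d).congr fun n => ?_
    congr 1
    refine Finset.sum_congr rfl fun i _ => ?_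
    rw [quad0]
    simp [hddef, Matrix.cons_val_zero, Matrix.cons_val_one, Matrix.cons_val_two,
      Matrix.cons_val_three, Matrix.cons_val_four, cons_val_five',
      Matrix.head_cons, Matrix.vecHead, Matrix.vecTail]
  -- the key identity:  bᵀ Ψ̄'_∞ b = −(Qc + Qd)
  have hL : b ⬝ᵥ PsiInfD.mulVec b = -(c ⬝ᵥ PsiInf.mulVec c + d ⬝ᵥ PsiInf.mulVec d) := by
    refine tendsto_nhds_unique hseqD ?_
    have h := (hQc.add hQd).neg
    refine h.congr fun n => ?_
    have hterm : ∀ i, b ⬝ᵥ (psiMatD (xi i) (eta i) 0).mulVec b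
        = -((2 * b 0 * xi i + b 1 * eta i + b 3)^2
            + (b 1 * xi i + 2 * b 2 * eta i + b 4)^2) := by
      intro i
      rw [psiMatD_zero]
      exact quad1 _ _ _ (hconic i)
    calc -((n : ℝ)⁻¹ * ∑ i ∈ Finset.range n, (2 * b 0 * xi i + b 1 * eta i + b 3)^2
          + (n : ℝ)⁻¹ * ∑ i ∈ Finset.range n, (b 1 * xi i + 2 * b 2 * eta i + b 4)^2)
        = (n : ℝ)⁻¹ * ∑ i ∈ Finset.range n,
            (-((2 * b 0 * xi i + b 1 * eta i + b 3)^2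
              + (b 1 * xi i + 2 * b 2 * eta i + b 4)^2)) := by
          rw [Finset.sum_neg_distrib, Finset.sum_add_distrib]; ring
      _ = (n : ℝ)⁻¹ * ∑ i ∈ Finset.range n,
            b ⬝ᵥ (psiMatD (xi i) (eta i) 0).mulVec b := by
          congr 1
          exact (Finset.sum_congr rfl fun i _ => (hterm i).symm)
  -- nonnegativity of the two limits
  have hQc0 : 0 ≤ c ⬝ᵥ PsiInf.mulVec c :=
    ge_of_tendsto' hQc fun n => by positivity
  have hQd0 : 0 ≤ d ⬝ᵥ PsiInf.mulVec d :=
    ge_of_tendsto' hQd fun n => by positivity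
  -- it suffices to exclude Qc = Qd = 0
  rw [hL]
  rcases lt_or_eq_of_le (by linarith : (0:ℝ) ≤ c ⬝ᵥ PsiInf.mulVec c + d ⬝ᵥ PsiInf.mulVec d)
    with hpos | heq
  · linarith
  exfalso
  have hQc' : c ⬝ᵥ PsiInf.mulVec c = 0 := by linarith
  have hQd' : d ⬝ᵥ PsiInf.mulVec d = 0 := by linarith
  -- Ψ̄_∞ is symmetric
  have hsymm : PsiInf.IsHermitian := by
    refine Matrix.IsHermitian.ext fun i j => ?_
    rw [star_trivial]
    have hentry : ∀ k l : Fin 6, Tendsto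
        (fun n : ℕ => ((n : ℝ)⁻¹ • ∑ i ∈ Finset.range n, psiMat (xi i) (eta i) 0) k l)
        atTop (𝓝 (PsiInf k l)) := by
      intro k l
      have h := (((continuous_apply l).comp (continuous_apply k)).tendsto PsiInf).comp hPsiInf
      exact h
    have hflip : ∀ n : ℕ,
        ((n : ℝ)⁻¹ • ∑ i' ∈ Finset.range n, psiMat (xi i') (eta i') 0) i j
          = ((n : ℝ)⁻¹ • ∑ i' ∈ Finset.range n, psiMat (xi i') (eta i') 0) j i := by
      intro n
      simp only [Matrix.smul_apply, Matrix.sum_apply, smul_eq_mul]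
      congr 1
      exact Finset.sum_congr rfl fun k _ => psi_symm _ _ _ i j
    exact tendsto_nhds_unique (hentry j i) ((hentry i j).congr hflip)
  -- Ψ̄_∞ is positive semidefinite
  have hpsd : PsiInf.PosSemidef := by
    refine .of_dotProduct_mulVec_nonneg hsymm fun u => ?_
    rw [star_trivial]
    refine ge_of_tendsto' (hseq u) fun n => ?_
    refine mul_nonneg (by positivity) (Finset.sum_nonneg fun i _ => ?_)
    rw [quad0]; positivity
  -- kernel vectors
  have hbker : PsiInf.mulVec b = 0 :=
    (hpsd.dotProduct_mulVec_zero_iff b).mp (by rw [star_trivial]; exact hQb)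
  have hcker : PsiInf.mulVec c = 0 :=
    (hpsd.dotProduct_mulVec_zero_iff c).mp (by rw [star_trivial]; exact hQc')
  have hdker : PsiInf.mulVec d = 0 :=
    (hpsd.dotProduct_mulVec_zero_iff d).mp (by rw [star_trivial]; exact hQd')
  -- kernel is one-dimensional
  have hfr : Module.finrank ℝ (LinearMap.ker PsiInf.mulVecLin) = 1 := by
    have h1 := LinearMap.finrank_range_add_finrank_ker PsiInf.mulVecLin
    have h2 : Module.finrank ℝ (LinearMap.range PsiInf.mulVecLin) = 5 := hrank
    rw [Module.finrank_fin_fun, h2] at h1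
    omega
  have hspan : (ℝ ∙ b) = LinearMap.ker PsiInf.mulVecLin := by
    apply Submodule.eq_of_le_of_finrank_eq
    · rw [Submodule.span_singleton_le_iff_mem]
      exact LinearMap.mem_ker.mpr (by simpa using hbker)
    · rw [finrank_span_singleton hb, hfr]
  obtain ⟨α, hα⟩ := Submodule.mem_span_singleton.mp
    (hspan ▸ LinearMap.mem_ker.mpr (show PsiInf.mulVecLin c = 0 by simpa using hcker))
  obtain ⟨γ, hγ⟩ := Submodule.mem_span_singleton.mp
    (hspan ▸ LinearMap.mem_ker.mpr (show PsiInf.mulVecLin d = 0 by simpa using hdker))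
  -- componentwise equations
  have e0 : α * b 0 = 0 := by have := congrFun hα 0; simpa [hcdef] using this
  have e1 : α * b 1 = 0 := by have := congrFun hα 1; simpa [hcdef] using this
  have e3 : α * b 3 = 2 * b 0 := by have := congrFun hα 3; simpa [hcdef] using this
  have e4 : α * b 4 = b 1 := by have := congrFun hα 4; simpa [hcdef] using this
  have e5 : α * b 5 = b 3 := by have := congrFun hα 5; simpa [hcdef] using this
  have f2 : γ * b 2 = 0 := by have := congrFun hγ 2; simpa [hddef] using this
  have f4 : γ * b 4 = 2 * b 2 := by have := congrFun hγ 4; simpa [hddef] using this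
  have f5 : γ * b 5 = b 4 := by have := congrFun hγ 5; simpa [hddef] using this
  -- derive that the first five coefficients vanish
  have hb0 : b 0 = 0 ∧ b 1 = 0 ∧ b 3 = 0 := by
    rcases eq_or_ne α 0 with h | h
    · subst h
      refine ⟨by linarith [e3], by linarith [e4], by linarith [e5]⟩
    · have h0 : b 0 = 0 := by
        rcases mul_eq_zero.mp e0 with h' | h'; exact absurd h' h; exact h'
      have h1 : b 1 = 0 := by
        rcases mul_eq_zero.mp e1 with h' | h'; exact absurd h' h; exact h'
      have h3 : b 3 = 0 := by
        have : α * b 3 = 0 := by rw [e3, h0]; ring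
        rcases mul_eq_zero.mp this with h' | h'; exact absurd h' h; exact h'
      exact ⟨h0, h1, h3⟩
  have hb2 : b 2 = 0 ∧ b 4 = 0 := by
    rcases eq_or_ne γ 0 with h | h
    · subst h
      refine ⟨by linarith [f4], by linarith [f5]⟩
    · have h2 : b 2 = 0 := by
        rcases mul_eq_zero.mp f2 with h' | h'; exact absurd h' h; exact h'
      have h4 : b 4 = 0 := by
        have : γ * b 4 = 0 := by rw [f4, h2]; ring
        rcases mul_eq_zero.mp this with h' | h'; exact absurd h' h; exact h'
      exact ⟨h2, h4⟩
  obtain ⟨h0, h1, h3⟩ := hb0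
  obtain ⟨h2, h4⟩ := hb2
  have h5 : b 5 = 0 := by
    have := hconic 0
    unfold conicEq at this
    rw [h0, h1, h2, h3, h4] at this
    linarith
  exact hb (funext fun k => by fin_cases k <;> simpa using ‹_›)
end
end

section
/- For any n ≥ 1 and any points (x₁,y₁), …, (xₙ,yₙ) ∈ ℝ², the equation λ_min(Ψₙ(v)) = 0 has exactly one solution v in [0, ∞), where λ_min denotes the smallest eigenvalue of a real symmetric matrix. -/
open MeasureTheory ProbabilityTheory Filter Matrix Finset
open scoped BigOperators NNReal Topology RealInnerProductSpace

noncomputable section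

open TwoLinesPaper

namespace TLaux
open Matrix Finset TwoLinesPaper

lemma cv5 (x:ℝ)(u:Fin 5 → ℝ): Matrix.vecCons x u 5 = u 4 := rfl
lemma cv4 (x:ℝ)(u:Fin 4 → ℝ): Matrix.vecCons x u 4 = u 3 := rfl
lemma cv3 (x:ℝ)(u:Fin 3 → ℝ): Matrix.vecCons x u 3 = u 2 := rfl
lemma cv2 (x:ℝ)(u:Fin 2 → ℝ): Matrix.vecCons x u 2 = u 1 := rfl
lemma cv1 (x:ℝ)(u:Fin 1 → ℝ): Matrix.vecCons x u 1 = u 0 := rfl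

lemma psi_expand (x y v : ℝ) (u : Fin 6 → ℝ) :
    u ⬝ᵥ (psiMat x y v).mulVec u
      = (x^4 - 6*x^2*v + 3*v^2) * (u 0)^2 + (x^2 - v)*(y^2 - v) * (u 1)^2
        + (y^4 - 6*y^2*v + 3*v^2) * (u 2)^2 + (x^2 - v) * (u 3)^2 + (y^2 - v) * (u 4)^2 + (u 5)^2
        + 2*((x^3 - 3*x*v)*y) * (u 0 * u 1) + 2*((x^2 - v)*(y^2 - v)) * (u 0 * u 2)
        + 2*(x^3 - 3*x*v) * (u 0 * u 3) + 2*((x^2 - v)*y) * (u 0 * u 4) + 2*(x^2 - v) * (u 0 * u 5)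
        + 2*(x*(y^3 - 3*y*v)) * (u 1 * u 2) + 2*((x^2 - v)*y) * (u 1 * u 3)
        + 2*(x*(y^2 - v)) * (u 1 * u 4) + 2*(x*y) * (u 1 * u 5)
        + 2*(x*(y^2 - v)) * (u 2 * u 3) + 2*(y^3 - 3*y*v) * (u 2 * u 4) + 2*(y^2 - v) * (u 2 * u 5)
        + 2*(x*y) * (u 3 * u 4) + 2*x * (u 3 * u 5) + 2*y * (u 4 * u 5) := by
  simp [psiMat, dotProduct, Matrix.mulVec, Fin.sum_univ_six, cv5, cv4, cv3, cv2, cv1]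
  ring

def sh (d e : ℝ) (u : Fin 6 → ℝ) : Fin 6 → ℝ :=
  ![u 0, u 1, u 2, 2*u 0*d + u 1*e + u 3, u 1*d + 2*u 2*e + u 4,
    u 0*d^2 + u 1*(d*e) + u 2*e^2 + u 3*d + u 4*e + u 5]

lemma sh0 (d e : ℝ) (u : Fin 6 → ℝ) : sh d e u 0 = u 0 := rfl
lemma sh1 (d e : ℝ) (u : Fin 6 → ℝ) : sh d e u 1 = u 1 := rfl
lemma sh2 (d e : ℝ) (u : Fin 6 → ℝ) : sh d e u 2 = u 2 := rfl
lemma sh3 (d e : ℝ) (u : Fin 6 → ℝ) : sh d e u 3 = 2*u 0*d + u 1*e + u 3 := rfl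
lemma sh4 (d e : ℝ) (u : Fin 6 → ℝ) : sh d e u 4 = u 1*d + 2*u 2*e + u 4 := rfl
lemma sh5 (d e : ℝ) (u : Fin 6 → ℝ) :
    sh d e u 5 = u 0*d^2 + u 1*(d*e) + u 2*e^2 + u 3*d + u 4*e + u 5 := rfl

set_option maxHeartbeats 4000000 in
lemma key1 (x y v t : ℝ) (u : Fin 6 → ℝ) :
    36 * (u ⬝ᵥ (psiMat x y v).mulVec u)
      = (sh (-t) (-t) u ⬝ᵥ (psiMat x y (v + t^2/3)).mulVec (sh (-t) (-t) u))
      + 4 * (sh (-t) 0 u ⬝ᵥ (psiMat x y (v + t^2/3)).mulVec (sh (-t) 0 u))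
      + (sh (-t) t u ⬝ᵥ (psiMat x y (v + t^2/3)).mulVec (sh (-t) t u))
      + 4 * (sh 0 (-t) u ⬝ᵥ (psiMat x y (v + t^2/3)).mulVec (sh 0 (-t) u))
      + 16 * (sh 0 0 u ⬝ᵥ (psiMat x y (v + t^2/3)).mulVec (sh 0 0 u))
      + 4 * (sh 0 t u ⬝ᵥ (psiMat x y (v + t^2/3)).mulVec (sh 0 t u))
      + (sh t (-t) u ⬝ᵥ (psiMat x y (v + t^2/3)).mulVec (sh t (-t) u))
      + 4 * (sh t 0 u ⬝ᵥ (psiMat x y (v + t^2/3)).mulVec (sh t 0 u))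
      + (sh t t u ⬝ᵥ (psiMat x y (v + t^2/3)).mulVec (sh t t u)) := by
  simp only [psi_expand, sh0, sh1, sh2, sh3, sh4, sh5]
  ring

lemma Q_sum {ι : Type*} (s : Finset ι) (A : ι → Matrix (Fin 6) (Fin 6) ℝ) (u : Fin 6 → ℝ) :
    u ⬝ᵥ (∑ i ∈ s, A i).mulVec u = ∑ i ∈ s, u ⬝ᵥ (A i).mulVec u := by
  induction s using Finset.cons_induction with
  | empty => simp [Matrix.zero_mulVec]
  | cons a s ha ih => simp [Finset.sum_cons, Matrix.add_mulVec, dotProduct_add, ih]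

lemma Q_add_smul (M : Matrix (Fin 6) (Fin 6) ℝ) (a b : Fin 6 → ℝ) (s : ℝ) :
    (a + s • b) ⬝ᵥ M.mulVec (a + s • b)
      = a ⬝ᵥ M.mulVec a + s * (a ⬝ᵥ M.mulVec b + b ⬝ᵥ M.mulVec a)
        + s^2 * (b ⬝ᵥ M.mulVec b) := by
  simp [Matrix.mulVec_add, Matrix.mulVec_smul, add_dotProduct, smul_dotProduct,
    dotProduct_add, dotProduct_smul, smul_eq_mul]
  ring

lemma Q_smul (M : Matrix (Fin 6) (Fin 6) ℝ) (c : ℝ) (u : Fin 6 → ℝ) :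
    (c • u) ⬝ᵥ M.mulVec (c • u) = c^2 * (u ⬝ᵥ M.mulVec u) := by
  simp [Matrix.mulVec_smul, smul_dotProduct, dotProduct_smul, smul_eq_mul]
  ring

lemma Q_matrix_comb (A B C : Matrix (Fin 6) (Fin 6) ℝ) (a b : ℝ) (u : Fin 6 → ℝ) :
    u ⬝ᵥ (A + a • B + b • C).mulVec u
      = u ⬝ᵥ A.mulVec u + a * (u ⬝ᵥ B.mulVec u) + b * (u ⬝ᵥ C.mulVec u) := by
  simp [Matrix.add_mulVec, Matrix.smul_mulVec, dotProduct_add, dotProduct_smul,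
    smul_eq_mul]

lemma unit_abs_le (u : Fin 6 → ℝ) (hu : ∑ i, u i ^ 2 = 1) (i : Fin 6) : |u i| ≤ 1 := by
  rw [← sq_le_one_iff_abs_le_one]
  calc u i ^ 2 ≤ ∑ j, u j ^ 2 :=
        Finset.single_le_sum (fun j _ => sq_nonneg (u j)) (Finset.mem_univ i)
    _ = 1 := hu

lemma Q_abs_le (M : Matrix (Fin 6) (Fin 6) ℝ) (u : Fin 6 → ℝ)
    (hu : ∑ i, u i ^ 2 = 1) :
    |u ⬝ᵥ M.mulVec u| ≤ ∑ i, ∑ j, |M i j| := by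
  calc |u ⬝ᵥ M.mulVec u| ≤ ∑ i, |u i * (M.mulVec u) i| := Finset.abs_sum_le_sum_abs _ _
    _ ≤ ∑ i, ∑ j, |M i j| := by
        refine Finset.sum_le_sum fun i _ => ?_
        rw [abs_mul]
        calc |u i| * |(M.mulVec u) i| ≤ 1 * |(M.mulVec u) i| :=
              mul_le_mul_of_nonneg_right (unit_abs_le u hu i) (abs_nonneg _)
          _ = |∑ j, M i j * u j| := by rw [one_mul]; rfl
          _ ≤ ∑ j, |M i j * u j| := Finset.abs_sum_le_sum_abs _ _
          _ ≤ ∑ j, |M i j| := by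
              refine Finset.sum_le_sum fun j _ => ?_
              rw [abs_mul]
              calc |M i j| * |u j| ≤ |M i j| * 1 :=
                    mul_le_mul_of_nonneg_left (unit_abs_le u hu j) (abs_nonneg _)
                _ = |M i j| := mul_one _

def matA (x y : ℝ) : Matrix (Fin 6) (Fin 6) ℝ :=
  !![-(6*x^2), -(3*x*y), -(x^2+y^2), -(3*x), -y, -1;
     -(3*x*y), -(x^2+y^2), -(3*x*y), -y, -x, 0;
     -(x^2+y^2), -(3*x*y), -(6*y^2), -x, -(3*y), -1;
     -(3*x), -y, -x, -1, 0, 0;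
     -y, -x, -(3*y), 0, -1, 0;
     -1, 0, -1, 0, 0, 0]

def matB : Matrix (Fin 6) (Fin 6) ℝ :=
  !![3,0,1,0,0,0; 0,1,0,0,0,0; 1,0,3,0,0,0; 0,0,0,0,0,0; 0,0,0,0,0,0; 0,0,0,0,0,0]

lemma matA_expand (x y : ℝ) (u : Fin 6 → ℝ) :
    u ⬝ᵥ (matA x y).mulVec u
      = -(6*x^2) * (u 0)^2 + (-(x^2+y^2)) * (u 1)^2 + (-(6*y^2)) * (u 2)^2
        + (-1) * (u 3)^2 + (-1) * (u 4)^2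
        + 2*(-(3*x*y)) * (u 0 * u 1) + 2*(-(x^2+y^2)) * (u 0 * u 2) + 2*(-(3*x)) * (u 0 * u 3)
        + 2*(-y) * (u 0 * u 4) + 2*(-1) * (u 0 * u 5)
        + 2*(-(3*x*y)) * (u 1 * u 2) + 2*(-y) * (u 1 * u 3) + 2*(-x) * (u 1 * u 4)
        + 2*(-x) * (u 2 * u 3) + 2*(-(3*y)) * (u 2 * u 4) + 2*(-1) * (u 2 * u 5) := by
  simp [matA, dotProduct, Matrix.mulVec, Fin.sum_univ_six, cv5, cv4, cv3, cv2, cv1,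
    Matrix.vecHead, Matrix.vecTail, Function.comp]
  ring

lemma matB_expand (u : Fin 6 → ℝ) :
    u ⬝ᵥ matB.mulVec u
      = 3 * (u 0)^2 + (u 1)^2 + 3 * (u 2)^2 + 2 * (u 0 * u 2) := by
  simp [matB, dotProduct, Matrix.mulVec, Fin.sum_univ_six, cv5, cv4, cv3, cv2, cv1,
    Matrix.vecHead, Matrix.vecTail, Function.comp]
  ring

lemma psiQDecomp (x y v : ℝ) (u : Fin 6 → ℝ) :
    u ⬝ᵥ (psiMat x y v).mulVec u
      = u ⬝ᵥ (psiMat x y 0).mulVec u + v * (u ⬝ᵥ (matA x y).mulVec u)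
        + v^2 * (u ⬝ᵥ matB.mulVec u) := by
  rw [psi_expand, psi_expand, matA_expand, matB_expand]
  ring

def e5v : Fin 6 → ℝ := ![0,0,0,0,0,1]
def e4v : Fin 6 → ℝ := ![0,0,0,0,1,0]

lemma he5 : ∑ i, e5v i ^ 2 = 1 := by
  simp [e5v, Fin.sum_univ_six, cv5, cv4, cv3, cv2, cv1]

lemma he4 : ∑ i, e4v i ^ 2 = 1 := by
  simp [e4v, Fin.sum_univ_six, cv5, cv4, cv3, cv2, cv1]

lemma psi_e5 (x y v : ℝ) : e5v ⬝ᵥ (psiMat x y v).mulVec e5v = 1 := by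
  rw [psi_expand]
  have h0 : e5v 0 = 0 := rfl; have h1 : e5v 1 = 0 := rfl; have h2 : e5v 2 = 0 := rfl; have h3 : e5v 3 = 0 := rfl; have h4 : e5v 4 = 0 := rfl; have h5 : e5v 5 = 1 := rfl
  rw [h0, h1, h2, h3, h4, h5]; ring

lemma psi_e4 (x y v : ℝ) : e4v ⬝ᵥ (psiMat x y v).mulVec e4v = y^2 - v := by
  rw [psi_expand]
  have h0 : e4v 0 = 0 := rfl; have h1 : e4v 1 = 0 := rfl; have h2 : e4v 2 = 0 := rfl; have h3 : e4v 3 = 0 := rfl; have h4 : e4v 4 = 1 := rfl; have h5 : e4v 5 = 0 := rfl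
  rw [h0, h1, h2, h3, h4, h5]; ring

lemma psi_zero_sq (x y : ℝ) (u : Fin 6 → ℝ) :
    u ⬝ᵥ (psiMat x y 0).mulVec u
      = (u 0 * x^2 + u 1 * (x*y) + u 2 * y^2 + u 3 * x + u 4 * y + u 5)^2 := by
  rw [psi_expand]; ring

lemma shc0 (t : ℝ) (u : Fin 6 → ℝ) :
    sh t 0 u + (1:ℝ) • sh (-t) 0 u + (-2:ℝ) • sh 0 0 u = (2*u 0*t^2) • e5v := by
  funext i
  fin_cases i <;>
    simp [sh, e5v, cv5, cv4, cv3, cv2, cv1] <;> ring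

lemma shc1 (t : ℝ) (u : Fin 6 → ℝ) :
    sh t t u + (-1:ℝ) • sh t 0 u + (-1:ℝ) • sh 0 t u + (1:ℝ) • sh 0 0 u
      = (u 1*t^2) • e5v := by
  funext i
  fin_cases i <;>
    simp [sh, e5v, cv5, cv4, cv3, cv2, cv1] <;> ring

lemma shc2 (t : ℝ) (u : Fin 6 → ℝ) :
    sh 0 t u + (1:ℝ) • sh 0 (-t) u + (-2:ℝ) • sh 0 0 u = (2*u 2*t^2) • e5v := by
  funext i
  fin_cases i <;>
    simp [sh, e5v, cv5, cv4, cv3, cv2, cv1] <;> ring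

lemma shc3 (t : ℝ) (u : Fin 6 → ℝ) (h0 : u 0 = 0) (h1 : u 1 = 0) :
    sh t 0 u + (-1:ℝ) • sh 0 0 u = (u 3*t) • e5v := by
  funext i
  fin_cases i <;>
    simp [sh, e5v, h0, h1, cv5, cv4, cv3, cv2, cv1] <;> ring

lemma shc4 (t : ℝ) (u : Fin 6 → ℝ) (h1 : u 1 = 0) (h2 : u 2 = 0) :
    sh 0 t u + (-1:ℝ) • sh 0 0 u = (u 4*t) • e5v := by
  funext i
  fin_cases i <;>
    simp [sh, e5v, h1, h2, cv5, cv4, cv3, cv2, cv1] <;> ring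

lemma shc5 (u : Fin 6 → ℝ) (h0 : u 0 = 0) (h1 : u 1 = 0) (h2 : u 2 = 0)
    (h3 : u 3 = 0) (h4 : u 4 = 0) :
    sh 0 0 u = u 5 • e5v := by
  funext i
  fin_cases i <;>
    simp [sh, e5v, h0, h1, h2, h3, h4, cv5, cv4, cv3, cv2, cv1]

end TLaux

namespace TLaux
open Matrix Finset TwoLinesPaper Filter

section Main
variable {n : ℕ} (x y : Fin n → ℝ)

def Psi (v : ℝ) : Matrix (Fin 6) (Fin 6) ℝ := ∑ i : Fin n, psiMat (x i) (y i) v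

def Sv (v : ℝ) : Set ℝ :=
  {r : ℝ | ∃ u : Fin 6 → ℝ, ∑ i, u i ^ 2 = 1 ∧ r = u ⬝ᵥ (Psi x y v).mulVec u}

lemma Qsum_pt (v : ℝ) (u : Fin 6 → ℝ) :
    u ⬝ᵥ (Psi x y v).mulVec u
      = ∑ i : Fin n, u ⬝ᵥ (psiMat (x i) (y i) v).mulVec u :=
  Q_sum _ _ _

lemma neS (v : ℝ) : (Sv x y v).Nonempty :=
  ⟨_, e5v, he5, rfl⟩

lemma bddS (v : ℝ) : BddBelow (Sv x y v) := by
  refine ⟨-(∑ a, ∑ b, |Psi x y v a b|), ?_⟩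
  rintro r ⟨u, hu, rfl⟩
  exact (abs_le.mp (Q_abs_le (Psi x y v) u hu)).1

lemma hpsd (v : ℝ) (hv : 0 ≤ sInf (Sv x y v)) (w : Fin 6 → ℝ) :
    0 ≤ w ⬝ᵥ (Psi x y v).mulVec w := by
  by_cases hw : w = 0
  · subst hw; simp
  · have hs : 0 < ∑ i, w i ^ 2 := by
      obtain ⟨i, hi⟩ := Function.ne_iff.mp hw
      have h1 : 0 < w i ^ 2 :=
        (sq_nonneg _).lt_of_ne fun h => hi (sq_eq_zero_iff.mp h.symm)
      exact lt_of_lt_of_le h1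
        (Finset.single_le_sum (fun j _ => sq_nonneg (w j)) (Finset.mem_univ i))
    set r := Real.sqrt (∑ i, w i ^ 2) with hr
    have hrpos : 0 < r := Real.sqrt_pos.mpr hs
    have hr2 : r ^ 2 = ∑ i, w i ^ 2 := Real.sq_sqrt hs.le
    have hwunit : ∑ i, (r⁻¹ • w) i ^ 2 = 1 := by
      simp only [Pi.smul_apply, smul_eq_mul, mul_pow, ← Finset.mul_sum]
      rw [← hr2]
      field_simp
    have hmem : (r⁻¹ • w) ⬝ᵥ (Psi x y v).mulVec (r⁻¹ • w) ∈ Sv x y v := ⟨_, hwunit, rfl⟩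
    have h0 : 0 ≤ (r⁻¹ • w) ⬝ᵥ (Psi x y v).mulVec (r⁻¹ • w) :=
      le_trans hv (csInf_le (bddS x y v) hmem)
    have hww : w = r • (r⁻¹ • w) := by
      rw [smul_smul, mul_inv_cancel₀ hrpos.ne', one_smul]
    calc (0:ℝ) ≤ r^2 * ((r⁻¹ • w) ⬝ᵥ (Psi x y v).mulVec (r⁻¹ • w)) :=
          mul_nonneg (sq_nonneg r) h0
      _ = w ⬝ᵥ (Psi x y v).mulVec w := by rw [← Q_smul, ← hww]

lemma minimizer (v : ℝ) :
    ∃ u : Fin 6 → ℝ, (∑ i, u i ^ 2 = 1) ∧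
      ∀ w : Fin 6 → ℝ, (∑ i, w i ^ 2 = 1) →
        u ⬝ᵥ (Psi x y v).mulVec u ≤ w ⬝ᵥ (Psi x y v).mulVec w := by
  have hC : IsCompact {u : Fin 6 → ℝ | ∑ i, u i ^ 2 = 1} := by
    refine (isCompact_closedBall (0 : Fin 6 → ℝ) 1).of_isClosed_subset ?_ ?_
    · exact isClosed_eq (continuous_finset_sum _ fun i _ => (continuous_apply i).pow 2)
        continuous_const
    · intro u hu
      rw [Metric.mem_closedBall, dist_zero_right]
      refine (pi_norm_le_iff_of_nonneg zero_le_one).mpr fun i => ?_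
      rw [Real.norm_eq_abs]
      exact unit_abs_le u hu i
  have hcont : Continuous fun u : Fin 6 → ℝ => u ⬝ᵥ (Psi x y v).mulVec u := by
    show Continuous fun u : Fin 6 → ℝ => ∑ i, u i * ∑ j, Psi x y v i j * u j
    exact continuous_finset_sum _ fun i _ =>
      (continuous_apply i).mul
        (continuous_finset_sum _ fun j _ => continuous_const.mul (continuous_apply j))
  obtain ⟨u, huS, hmin⟩ := hC.exists_isMinOn ⟨e5v, he5⟩ hcont.continuousOn
  exact ⟨u, huS, fun w hw => isMinOn_iff.mp hmin w hw⟩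

lemma Qe5 (v : ℝ) : e5v ⬝ᵥ (Psi x y v).mulVec e5v = (n : ℝ) := by
  rw [Qsum_pt]
  simp [psi_e5]

lemma uniq_core (hn : 1 ≤ n) (v₀ v₁ : ℝ) (hlt : v₀ < v₁)
    (h0 : sInf (Sv x y v₀) = 0) (h1 : sInf (Sv x y v₁) = 0) : False := by
  obtain ⟨u, huSph, humin⟩ := minimizer x y v₀
  have hQu : u ⬝ᵥ (Psi x y v₀).mulVec u = 0 := by
    have hle : sInf (Sv x y v₀) ≤ u ⬝ᵥ (Psi x y v₀).mulVec u :=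
      csInf_le (bddS x y v₀) ⟨u, huSph, rfl⟩
    have hge : u ⬝ᵥ (Psi x y v₀).mulVec u ≤ sInf (Sv x y v₀) := by
      refine le_csInf (neS x y v₀) ?_
      rintro r ⟨w, hw, rfl⟩
      exact humin w hw
    rw [h0] at hle hge
    linarith
  set t := Real.sqrt (3*(v₁ - v₀)) with htdef
  have ht2 : t^2 = 3*(v₁ - v₀) := Real.sq_sqrt (by linarith)
  have htpos : 0 < t := Real.sqrt_pos.mpr (by linarith)
  have hv1 : v₁ = v₀ + t^2/3 := by rw [ht2]; ring
  have hz : ∀ w : Fin 6 → ℝ, 0 ≤ w ⬝ᵥ (Psi x y v₁).mulVec w :=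
    hpsd x y v₁ (le_of_eq h1.symm)
  have h9 : 36 * (u ⬝ᵥ (Psi x y v₀).mulVec u)
      = (sh (-t) (-t) u ⬝ᵥ (Psi x y v₁).mulVec (sh (-t) (-t) u))
      + 4 * (sh (-t) 0 u ⬝ᵥ (Psi x y v₁).mulVec (sh (-t) 0 u))
      + (sh (-t) t u ⬝ᵥ (Psi x y v₁).mulVec (sh (-t) t u))
      + 4 * (sh 0 (-t) u ⬝ᵥ (Psi x y v₁).mulVec (sh 0 (-t) u))
      + 16 * (sh 0 0 u ⬝ᵥ (Psi x y v₁).mulVec (sh 0 0 u))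
      + 4 * (sh 0 t u ⬝ᵥ (Psi x y v₁).mulVec (sh 0 t u))
      + (sh t (-t) u ⬝ᵥ (Psi x y v₁).mulVec (sh t (-t) u))
      + 4 * (sh t 0 u ⬝ᵥ (Psi x y v₁).mulVec (sh t 0 u))
      + (sh t t u ⬝ᵥ (Psi x y v₁).mulVec (sh t t u)) := by
    rw [hv1]
    simp only [Qsum_pt]
    simp only [Finset.mul_sum]
    rw [← Finset.sum_add_distrib, ← Finset.sum_add_distrib, ← Finset.sum_add_distrib,
      ← Finset.sum_add_distrib, ← Finset.sum_add_distrib, ← Finset.sum_add_distrib,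
      ← Finset.sum_add_distrib, ← Finset.sum_add_distrib]
    exact Finset.sum_congr rfl fun i _ => key1 _ _ _ _ _
  rw [hQu, mul_zero] at h9
  have n1 := hz (sh (-t) (-t) u)
  have n2 := hz (sh (-t) 0 u)
  have n3 := hz (sh (-t) t u)
  have n4 := hz (sh 0 (-t) u)
  have n5 := hz (sh 0 0 u)
  have n6 := hz (sh 0 t u)
  have n7 := hz (sh t (-t) u)
  have n8 := hz (sh t 0 u)
  have n9 := hz (sh t t u)
  have q00 : sh 0 0 u ⬝ᵥ (Psi x y v₁).mulVec (sh 0 0 u) = 0 := by linarith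
  have qm0 : sh (-t) 0 u ⬝ᵥ (Psi x y v₁).mulVec (sh (-t) 0 u) = 0 := by linarith
  have qp0 : sh t 0 u ⬝ᵥ (Psi x y v₁).mulVec (sh t 0 u) = 0 := by linarith
  have q0m : sh 0 (-t) u ⬝ᵥ (Psi x y v₁).mulVec (sh 0 (-t) u) = 0 := by linarith
  have q0p : sh 0 t u ⬝ᵥ (Psi x y v₁).mulVec (sh 0 t u) = 0 := by linarith
  have qpp : sh t t u ⬝ᵥ (Psi x y v₁).mulVec (sh t t u) = 0 := by linarith
  have zlem : ∀ (a b : Fin 6 → ℝ) (s : ℝ),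
      a ⬝ᵥ (Psi x y v₁).mulVec a = 0 → b ⬝ᵥ (Psi x y v₁).mulVec b = 0 →
      (a + s • b) ⬝ᵥ (Psi x y v₁).mulVec (a + s • b) = 0 := by
    intro a b s ha hb
    have h1' := hz (a + (1:ℝ) • b)
    rw [Q_add_smul, ha, hb] at h1'
    have h2' := hz (a + (-1:ℝ) • b)
    rw [Q_add_smul, ha, hb] at h2'
    have hc : a ⬝ᵥ (Psi x y v₁).mulVec b + b ⬝ᵥ (Psi x y v₁).mulVec a = 0 := by nlinarith
    rw [Q_add_smul, ha, hb, hc]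
    ring
  have hce5 : ∀ c : ℝ, (c • e5v) ⬝ᵥ (Psi x y v₁).mulVec (c • e5v) = 0 → c = 0 := by
    intro c hc
    rw [Q_smul, Qe5] at hc
    have hn' : (0:ℝ) < (n:ℝ) := by exact_mod_cast hn
    rcases mul_eq_zero.mp hc with h | h
    · exact sq_eq_zero_iff.mp h
    · exact absurd h hn'.ne'
  have tne : t ≠ 0 := htpos.ne'
  have ht2pos : (0:ℝ) < t^2 := by positivity
  rcases ne_or_eq (u 0) 0 with h0u | h0u
  · have z1 := zlem _ _ (1:ℝ) qp0 qm0
    have z2 := zlem _ _ (-2:ℝ) z1 q00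
    rw [shc0 t u] at z2
    have hc := hce5 _ z2
    rcases mul_eq_zero.mp hc with h | h
    · exact h0u (by linarith)
    · exact ht2pos.ne' h
  rcases ne_or_eq (u 1) 0 with h1u | h1u
  · have z1 := zlem _ _ (-1:ℝ) qpp qp0
    have z2 := zlem _ _ (-1:ℝ) z1 q0p
    have z3 := zlem _ _ (1:ℝ) z2 q00
    rw [shc1 t u] at z3
    have hc := hce5 _ z3
    rcases mul_eq_zero.mp hc with h | h
    · exact h1u h
    · exact ht2pos.ne' h
  rcases ne_or_eq (u 2) 0 with h2u | h2u
  · have z1 := zlem _ _ (1:ℝ) q0p q0m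
    have z2 := zlem _ _ (-2:ℝ) z1 q00
    rw [shc2 t u] at z2
    have hc := hce5 _ z2
    rcases mul_eq_zero.mp hc with h | h
    · exact h2u (by linarith)
    · exact ht2pos.ne' h
  rcases ne_or_eq (u 3) 0 with h3u | h3u
  · have z1 := zlem _ _ (-1:ℝ) qp0 q00
    rw [shc3 t u h0u h1u] at z1
    have hc := hce5 _ z1
    rcases mul_eq_zero.mp hc with h | h
    · exact h3u h
    · exact tne h
  rcases ne_or_eq (u 4) 0 with h4u | h4u
  · have z1 := zlem _ _ (-1:ℝ) q0p q00
    rw [shc4 t u h1u h2u] at z1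
    have hc := hce5 _ z1
    rcases mul_eq_zero.mp hc with h | h
    · exact h4u h
    · exact tne h
  · rw [shc5 u h0u h1u h2u h3u h4u] at q00
    have h5u := hce5 _ q00
    rw [Fin.sum_univ_six, h0u, h1u, h2u, h3u, h4u, h5u] at huSph
    norm_num at huSph

lemma gap_bound (v v' : ℝ) :
    sInf (Sv x y v') ≤ sInf (Sv x y v)
      + (|v' - v| * (∑ a, ∑ b, |(∑ i : Fin n, matA (x i) (y i)) a b|)
        + |v'^2 - v^2| * (∑ a, ∑ b, |(∑ _i : Fin n, (matB : Matrix (Fin 6) (Fin 6) ℝ)) a b|)) := by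
  set SA := ∑ i : Fin n, matA (x i) (y i) with hSA
  set SB := ∑ _i : Fin n, (matB : Matrix (Fin 6) (Fin 6) ℝ) with hSB
  set KA := ∑ a, ∑ b, |SA a b| with hKA
  set KB := ∑ a, ∑ b, |SB a b| with hKB
  have hQd : ∀ u : Fin 6 → ℝ, (∑ i, u i ^ 2 = 1) →
      u ⬝ᵥ (Psi x y v').mulVec u
        ≤ u ⬝ᵥ (Psi x y v).mulVec u + (|v' - v| * KA + |v'^2 - v^2| * KB) := by
    intro u hu
    have e1 : ∀ w : ℝ, u ⬝ᵥ (Psi x y w).mulVec u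
        = u ⬝ᵥ (Psi x y 0).mulVec u + w * (u ⬝ᵥ SA.mulVec u) + w^2 * (u ⬝ᵥ SB.mulVec u) := by
      intro w
      rw [Qsum_pt, Qsum_pt, hSA, hSB, Q_sum, Q_sum, Finset.mul_sum, Finset.mul_sum,
        ← Finset.sum_add_distrib, ← Finset.sum_add_distrib]
      exact Finset.sum_congr rfl fun i _ => psiQDecomp _ _ _ _
    have key : u ⬝ᵥ (Psi x y v').mulVec u - u ⬝ᵥ (Psi x y v).mulVec u
        = (v' - v) * (u ⬝ᵥ SA.mulVec u) + (v'^2 - v^2) * (u ⬝ᵥ SB.mulVec u) := by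
      rw [e1 v', e1 v]; ring
    have hA := Q_abs_le SA u hu
    have hB := Q_abs_le SB u hu
    have b1 : (v' - v) * (u ⬝ᵥ SA.mulVec u) ≤ |v' - v| * KA := by
      calc (v' - v) * (u ⬝ᵥ SA.mulVec u) ≤ |(v' - v) * (u ⬝ᵥ SA.mulVec u)| := le_abs_self _
        _ = |v' - v| * |u ⬝ᵥ SA.mulVec u| := abs_mul _ _
        _ ≤ |v' - v| * KA := mul_le_mul_of_nonneg_left hA (abs_nonneg _)
    have b2 : (v'^2 - v^2) * (u ⬝ᵥ SB.mulVec u) ≤ |v'^2 - v^2| * KB := by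
      calc (v'^2 - v^2) * (u ⬝ᵥ SB.mulVec u) ≤ |(v'^2 - v^2) * (u ⬝ᵥ SB.mulVec u)| :=
            le_abs_self _
        _ = |v'^2 - v^2| * |u ⬝ᵥ SB.mulVec u| := abs_mul _ _
        _ ≤ |v'^2 - v^2| * KB := mul_le_mul_of_nonneg_left hB (abs_nonneg _)
    linarith
  have h2 : ∀ r ∈ Sv x y v,
      sInf (Sv x y v') - (|v' - v| * KA + |v'^2 - v^2| * KB) ≤ r := by
    rintro r ⟨u, hu, rfl⟩
    have hle := csInf_le (bddS x y v') (⟨u, hu, rfl⟩ : _ ∈ Sv x y v')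
    have := hQd u hu
    linarith
  have h3 := le_csInf (neS x y v) h2
  linarith

lemma lam_cont : Continuous fun v => sInf (Sv x y v) := by
  rw [continuous_iff_continuousAt]
  intro v
  obtain ⟨KA, KB, hxb⟩ : ∃ KA KB : ℝ, ∀ v',
      |sInf (Sv x y v') - sInf (Sv x y v)| ≤ |v' - v| * KA + |v'^2 - v^2| * KB := by
    refine ⟨∑ a, ∑ b, |(∑ i : Fin n, matA (x i) (y i)) a b|,
      ∑ a, ∑ b, |(∑ _i : Fin n, (matB : Matrix (Fin 6) (Fin 6) ℝ)) a b|, fun v' => ?_⟩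
    have g1 := gap_bound x y v v'
    have g2 := gap_bound x y v' v
    rw [abs_sub_comm v v', abs_sub_comm (v^2) (v'^2)] at g2
    rw [abs_le]
    constructor <;> linarith
  rw [ContinuousAt, tendsto_iff_dist_tendsto_zero]
  have hφ : Tendsto (fun v' => |v' - v| * KA + |v'^2 - v^2| * KB) (𝓝 v) (𝓝 0) := by
    have hc : Continuous fun v' : ℝ => |v' - v| * KA + |v'^2 - v^2| * KB :=
      (((continuous_id.sub continuous_const).abs).mul continuous_const).add
        ((((continuous_pow 2).sub continuous_const).abs).mul continuous_const)
    have h := hc.tendsto v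
    simpa using h
  exact squeeze_zero (fun v' => dist_nonneg) (fun v' => by rw [Real.dist_eq]; exact hxb v') hφ

lemma exist_root (hn : 1 ≤ n) : ∃ v : ℝ, 0 ≤ v ∧ sInf (Sv x y v) = 0 := by
  set V := (∑ i : Fin n, (y i)^2) + 1 with hV
  have hV0 : (0:ℝ) ≤ V := by
    rw [hV]; positivity
  have hfV : sInf (Sv x y V) ≤ -1 := by
    have hval : e4v ⬝ᵥ (Psi x y V).mulVec e4v = (∑ i : Fin n, (y i)^2) - n * V := by
      rw [Qsum_pt]
      simp only [psi_e4]
      rw [Finset.sum_sub_distrib, Finset.sum_const, Finset.card_univ, Fintype.card_fin,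
        nsmul_eq_mul]
    have hle := csInf_le (bddS x y V) (⟨e4v, he4, rfl⟩ : _ ∈ Sv x y V)
    rw [hval] at hle
    have hnV : V ≤ (n:ℝ) * V := le_mul_of_one_le_left hV0 (by exact_mod_cast hn)
    linarith
  have hf0 : 0 ≤ sInf (Sv x y 0) := by
    refine le_csInf (neS x y 0) ?_
    rintro r ⟨u, hu, rfl⟩
    rw [Qsum_pt]
    exact Finset.sum_nonneg fun i _ => by rw [psi_zero_sq]; positivity
  have hsub := intermediate_value_Icc' hV0 (lam_cont x y).continuousOn
  have h0mem : (0:ℝ) ∈ Set.Icc (sInf (Sv x y V)) (sInf (Sv x y 0)) := ⟨by linarith, hf0⟩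
  obtain ⟨v₀, hmem, hval⟩ := hsub h0mem
  exact ⟨v₀, hmem.1, hval⟩

end Main
end TLaux


/-- the equation `λ_min(Ψₙ(v)) = 0` has exactly one nonnegative
solution. -/
theorem lamMin_eq_zero_unique_nonneg_solution
    (n : ℕ) (hn : 1 ≤ n) (x y : Fin n → ℝ) :
    ∃! v : ℝ, 0 ≤ v ∧ lamMin (∑ i : Fin n, psiMat (x i) (y i) v) = 0 := by
  have hlam : ∀ v : ℝ,
      lamMin (∑ i : Fin n, psiMat (x i) (y i) v) = sInf (TLaux.Sv x y v) := fun v => rfl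
  obtain ⟨v₀, hv₀0, hv₀⟩ := TLaux.exist_root x y hn
  refine ⟨v₀, ⟨hv₀0, by rw [hlam]; exact hv₀⟩, ?_⟩
  rintro v' ⟨hv'0, hv'root⟩
  rw [hlam] at hv'root
  by_contra hne
  rcases lt_or_gt_of_ne hne with h | h
  · exact TLaux.uniq_core x y hn v' v₀ h hv'root hv₀
  · exact TLaux.uniq_core x y hn v₀ v' h hv₀ hv'root
end
end

section
/- Let β = (A,2B,C,2D,2E,F)ᵀ ∈ ℝ⁶ be nonzero. The zero set {(x,y) ∈ ℝ² : Ax² + 2Bxy + Cy² + 2Dx + 2Ey + F = 0} is the union of two distinct intersecting straight lines if and only if Δ(β) = 0 and AC < B², where Δ(β) = ACF + 2BDE − AE² − CD² − B²F is the determinant of the 3×3 symmetric matrix with rows (A,B,D), (B,C,E), (D,E,F). -/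
open MeasureTheory ProbabilityTheory Filter Matrix Finset
open scoped BigOperators NNReal Topology RealInnerProductSpace

noncomputable section

open TwoLinesPaper
/-- Helper: if the conic equation factors into two non-parallel linear factors
through a common point, then its zero set is a union of two distinct
intersecting lines. -/
private lemma two_lines_of_factor (b : Fin 6 → ℝ) (al be ga de x0 y0 : ℝ)
    (hdet : al * de - be * ga ≠ 0)
    (hset : ∀ x y : ℝ, conicEq b x y ↔
      (al * (x - x0) + be * (y - y0)) * (ga * (x - x0) + de * (y - y0)) = 0) :
    ∃ l1 l2 : Set (ℝ × ℝ), IsLine l1 ∧ IsLine l2 ∧ l1 ≠ l2 ∧ (l1 ∩ l2).Nonempty ∧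
      {p : ℝ × ℝ | conicEq b p.1 p.2} = l1 ∪ l2 := by
  refine ⟨{p : ℝ × ℝ | al * p.1 + be * p.2 = al * x0 + be * y0},
    {p : ℝ × ℝ | ga * p.1 + de * p.2 = ga * x0 + de * y0}, ?_, ?_, ?_, ?_, ?_⟩
  · refine ⟨al, be, al * x0 + be * y0, ?_, rfl⟩
    intro h
    rw [Prod.mk.injEq] at h
    exact hdet (by rw [h.1, h.2]; ring)
  · refine ⟨ga, de, ga * x0 + de * y0, ?_, rfl⟩
    intro h
    rw [Prod.mk.injEq] at h
    exact hdet (by rw [h.1, h.2]; ring)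
  · intro h
    have hw1 : ((x0 - be, y0 + al) : ℝ × ℝ) ∈
        {p : ℝ × ℝ | al * p.1 + be * p.2 = al * x0 + be * y0} := by
      simp only [Set.mem_setOf_eq]; ring
    rw [h] at hw1
    simp only [Set.mem_setOf_eq] at hw1
    exact hdet (by linear_combination hw1)
  · exact ⟨(x0, y0), ⟨rfl, rfl⟩⟩
  · ext ⟨x, y⟩
    simp only [Set.mem_setOf_eq, Set.mem_union]
    rw [hset x y, mul_eq_zero]
    constructor
    · rintro (h | h)
      · exact Or.inl (by linear_combination h)
      · exact Or.inr (by linear_combination h)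
    · rintro (h | h)
      · exact Or.inl (by linear_combination h)
      · exact Or.inr (by linear_combination h)

set_option maxHeartbeats 1000000 in
/-- the conic is a couple of distinct intersecting lines iff
`Δ(β) = 0` and `AC < B²`. -/
theorem conic_is_two_intersecting_lines_iff
    (b : Fin 6 → ℝ) (hb : b ≠ 0) :
    (∃ l1 l2 : Set (ℝ × ℝ), IsLine l1 ∧ IsLine l2 ∧ l1 ≠ l2 ∧ (l1 ∩ l2).Nonempty ∧
      {p : ℝ × ℝ | conicEq b p.1 p.2} = l1 ∪ l2) ↔
    (DeltaF b = 0 ∧ b 0 * b 2 < (b 1 / 2)^2) := by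
  constructor
  · rintro ⟨l1, l2, hl1, hl2, hne, ⟨z, hz1, hz2⟩, hS⟩
    obtain ⟨a1, c1, e1, hne1, rfl⟩ := hl1
    obtain ⟨a2, c2, e2, hne2, rfl⟩ := hl2
    simp only [Set.mem_setOf_eq] at hz1 hz2
    have hiff := Set.ext_iff.mp hS
    -- evaluation of the conic at points of the two lines
    have hmem1 : ∀ t : ℝ, conicEq b (z.1 + t * c1) (z.2 - t * a1) := by
      intro t
      refine (hiff (z.1 + t * c1, z.2 - t * a1)).mpr (Or.inl ?_)
      simp only [Set.mem_setOf_eq]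
      linear_combination hz1
    have hmem2 : ∀ t : ℝ, conicEq b (z.1 + t * c2) (z.2 - t * a2) := by
      intro t
      refine (hiff (z.1 + t * c2, z.2 - t * a2)).mpr (Or.inr ?_)
      simp only [Set.mem_setOf_eq]
      linear_combination hz2
    have hE0 : b 0 * z.1^2 + b 1 * (z.1 * z.2) + b 2 * z.2^2 + b 3 * z.1 + b 4 * z.2 + b 5 = 0 := by
      have := hmem1 0; simp only [conicEq] at this; linear_combination this
    have hE1p := hmem1 1; have hE1m := hmem1 (-1)
    have hE2p := hmem2 1; have hE2m := hmem2 (-1)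
    simp only [conicEq] at hE1p hE1m hE2p hE2m
    have hQ1 : b 0 * c1^2 - b 1 * (c1 * a1) + b 2 * a1^2 = 0 := by
      linear_combination (hE1p + hE1m) / 2 - hE0
    have hQ2 : b 0 * c2^2 - b 1 * (c2 * a2) + b 2 * a2^2 = 0 := by
      linear_combination (hE2p + hE2m) / 2 - hE0
    have hG1 : (2 * b 0 * z.1 + b 1 * z.2 + b 3) * c1
        - (b 1 * z.1 + 2 * b 2 * z.2 + b 4) * a1 = 0 := by
      linear_combination (hE1p - hE1m) / 2
    have hG2 : (2 * b 0 * z.1 + b 1 * z.2 + b 3) * c2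
        - (b 1 * z.1 + 2 * b 2 * z.2 + b 4) * a2 = 0 := by
      linear_combination (hE2p - hE2m) / 2
    -- the two lines are not parallel
    have hdel : a1 * c2 - a2 * c1 ≠ 0 := by
      intro hd
      apply hne
      have key1 : ∀ u v : ℝ, a1 * u + c1 * v = 0 → a2 * u + c2 * v = 0 := by
        intro u v h
        rcases ne_or_eq a1 0 with h1 | h1
        · have hh : a1 * (a2 * u + c2 * v) = 0 := by linear_combination a2 * h + v * hd
          exact (mul_eq_zero.mp hh).resolve_left h1
        · have hc1 : c1 ≠ 0 := fun h0 => hne1 (by rw [Prod.mk.injEq]; exact ⟨h1, h0⟩)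
          have hh : c1 * (a2 * u + c2 * v) = 0 := by linear_combination c2 * h - u * hd
          exact (mul_eq_zero.mp hh).resolve_left hc1
      have key2 : ∀ u v : ℝ, a2 * u + c2 * v = 0 → a1 * u + c1 * v = 0 := by
        intro u v h
        rcases ne_or_eq a2 0 with h1 | h1
        · have hh : a2 * (a1 * u + c1 * v) = 0 := by linear_combination a1 * h - v * hd
          exact (mul_eq_zero.mp hh).resolve_left h1
        · have hc2 : c2 ≠ 0 := fun h0 => hne2 (by rw [Prod.mk.injEq]; exact ⟨h1, h0⟩)
          have hh : c2 * (a1 * u + c1 * v) = 0 := by linear_combination c1 * h + u * hd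
          exact (mul_eq_zero.mp hh).resolve_left hc2
      ext p
      simp only [Set.mem_setOf_eq]
      constructor
      · intro h
        have := key1 (p.1 - z.1) (p.2 - z.2) (by linear_combination h - hz1)
        linear_combination this + hz2
      · intro h
        have := key2 (p.1 - z.1) (p.2 - z.2) (by linear_combination h - hz2)
        linear_combination this + hz1
    -- the gradient vanishes at the common point
    have hg1 : 2 * b 0 * z.1 + b 1 * z.2 + b 3 = 0 := by
      have h : (2 * b 0 * z.1 + b 1 * z.2 + b 3) * (a1 * c2 - a2 * c1) = 0 := by
        linear_combination a1 * hG2 - a2 * hG1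
      exact (mul_eq_zero.mp h).resolve_right hdel
    have hg2 : b 1 * z.1 + 2 * b 2 * z.2 + b 4 = 0 := by
      have h : (b 1 * z.1 + 2 * b 2 * z.2 + b 4) * (a1 * c2 - a2 * c1) = 0 := by
        linear_combination c1 * hG2 - c2 * hG1
      exact (mul_eq_zero.mp h).resolve_right hdel
    constructor
    · -- Δ(β) = 0
      simp only [DeltaF]
      linear_combination
        ((b 1 / 2 * (b 4 / 2) - b 2 * (b 3 / 2) - (b 0 * b 2 - (b 1 / 2)^2) * z.1) / 2) * hg1 +
        ((b 1 / 2 * (b 3 / 2) - b 0 * (b 4 / 2) - (b 0 * b 2 - (b 1 / 2)^2) * z.2) / 2) * hg2 +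
        (b 0 * b 2 - (b 1 / 2)^2) * hE0
    · -- AC < B²
      by_contra hcon
      push_neg at hcon
      set β : ℝ := 2 * b 0 * (c1 * c2) + b 1 * (-(c1 * a2) - c2 * a1) + 2 * b 2 * (a1 * a2)
        with hβdef
      have hid : β^2 = (b 1^2 - 4 * b 0 * b 2) * (a1 * c2 - a2 * c1)^2 := by
        linear_combination (4 * (b 0 * c2^2 - b 1 * (c2 * a2) + b 2 * a2^2)) * hQ1
      have hβ : β = 0 := by
        have h1 : β^2 ≤ 0 := by nlinarith [sq_nonneg (a1 * c2 - a2 * c1)]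
        have h2 : (0:ℝ) ≤ β^2 := sq_nonneg β
        nlinarith
      have hd2 : (a1 * c2 - a2 * c1)^2 ≠ 0 := pow_ne_zero 2 hdel
      have hA : b 0 = 0 := by
        have h : b 0 * (a1 * c2 - a2 * c1)^2 = 0 := by
          linear_combination a2^2 * hQ1 + a1^2 * hQ2 - (a1 * a2) * hβ
        exact (mul_eq_zero.mp h).resolve_right hd2
      have hC : b 2 = 0 := by
        have h : b 2 * (a1 * c2 - a2 * c1)^2 = 0 := by
          linear_combination c2^2 * hQ1 + c1^2 * hQ2 - (c1 * c2) * hβ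
        exact (mul_eq_zero.mp h).resolve_right hd2
      have hB : b 1 = 0 := by
        have h : b 1 * (a1 * c2 - a2 * c1)^2 = 0 := by
          linear_combination 2 * (a2 * c2) * hQ1 + 2 * (a1 * c1) * hQ2 -
            (c1 * a2 + c2 * a1) * hβ
        exact (mul_eq_zero.mp h).resolve_right hd2
      have hb3 : b 3 = 0 := by linear_combination hg1 - 2 * z.1 * hA - z.2 * hB
      have hb4 : b 4 = 0 := by linear_combination hg2 - z.1 * hB - 2 * z.2 * hC
      have hb5 : b 5 = 0 := by
        linear_combination hE0 - z.1^2 * hA - (z.1 * z.2) * hB - z.2^2 * hC -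
          z.1 * hb3 - z.2 * hb4
      apply hb
      funext i
      fin_cases i <;> simp [hA, hB, hC, hb3, hb4, hb5]
  · rintro ⟨hΔ, hlt⟩
    simp only [DeltaF] at hΔ
    have hdisc : 0 < (b 1 / 2)^2 - b 0 * b 2 := by linarith
    set s : ℝ := Real.sqrt ((b 1 / 2)^2 - b 0 * b 2) with hsdef
    have hs2 : s^2 = (b 1 / 2)^2 - b 0 * b 2 := Real.sq_sqrt hdisc.le
    have hspos : 0 < s := Real.sqrt_pos.mpr hdisc
    have hden : b 0 * b 2 - (b 1 / 2)^2 ≠ 0 := by nlinarith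
    obtain ⟨x0, e1⟩ : ∃ x : ℝ, x * (b 0 * b 2 - (b 1 / 2)^2)
        = (b 1 / 2) * (b 4 / 2) - b 2 * (b 3 / 2) := ⟨_, div_mul_cancel₀ _ hden⟩
    obtain ⟨y0, e2⟩ : ∃ y : ℝ, y * (b 0 * b 2 - (b 1 / 2)^2)
        = (b 1 / 2) * (b 3 / 2) - b 0 * (b 4 / 2) := ⟨_, div_mul_cancel₀ _ hden⟩
    have h1 : b 0 * x0 + (b 1 / 2) * y0 + b 3 / 2 = 0 := by
      have hh : (b 0 * x0 + (b 1 / 2) * y0 + b 3 / 2) * (b 0 * b 2 - (b 1 / 2)^2) = 0 := by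
        linear_combination b 0 * e1 + (b 1 / 2) * e2
      exact (mul_eq_zero.mp hh).resolve_right hden
    have h2 : (b 1 / 2) * x0 + b 2 * y0 + b 4 / 2 = 0 := by
      have hh : ((b 1 / 2) * x0 + b 2 * y0 + b 4 / 2) * (b 0 * b 2 - (b 1 / 2)^2) = 0 := by
        linear_combination (b 1 / 2) * e1 + b 2 * e2
      exact (mul_eq_zero.mp hh).resolve_right hden
    have h3 : (b 3 / 2) * x0 + (b 4 / 2) * y0 + b 5 = 0 := by
      have hh : ((b 3 / 2) * x0 + (b 4 / 2) * y0 + b 5) * (b 0 * b 2 - (b 1 / 2)^2) = 0 := by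
        linear_combination (b 3 / 2) * e1 + (b 4 / 2) * e2 + hΔ
      exact (mul_eq_zero.mp hh).resolve_right hden
    rcases ne_or_eq (b 0) 0 with hA | hA
    · apply two_lines_of_factor b (b 0) (b 1 / 2 + s) (b 0) (b 1 / 2 - s) x0 y0
      · intro h
        apply hA
        have : b 0 * (2 * s) = 0 := by linear_combination -h
        exact (mul_eq_zero.mp this).resolve_right (by positivity)
      · intro x y
        have key : (b 0 * (x - x0) + (b 1 / 2 + s) * (y - y0)) *
            (b 0 * (x - x0) + (b 1 / 2 - s) * (y - y0)) =
            b 0 * (b 0 * x^2 + b 1 * (x * y) + b 2 * y^2 + b 3 * x + b 4 * y + b 5) := by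
          linear_combination (-(y - y0)^2) * hs2 - b 0 * (2 * x - x0) * h1 -
            b 0 * (2 * y - y0) * h2 - b 0 * h3
        simp only [conicEq]
        rw [key, mul_eq_zero]
        exact ⟨fun h => Or.inr h, fun h => h.resolve_left hA⟩
    · rcases ne_or_eq (b 2) 0 with hC | hC
      · apply two_lines_of_factor b (b 1 / 2 + s) (b 2) (b 1 / 2 - s) (b 2) x0 y0
        · intro h
          apply hC
          have : b 2 * (2 * s) = 0 := by linear_combination h
          exact (mul_eq_zero.mp this).resolve_right (by positivity)
        · intro x y
          have key : ((b 1 / 2 + s) * (x - x0) + b 2 * (y - y0)) *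
              ((b 1 / 2 - s) * (x - x0) + b 2 * (y - y0)) =
              b 2 * (b 0 * x^2 + b 1 * (x * y) + b 2 * y^2 + b 3 * x + b 4 * y + b 5) := by
            linear_combination (-(x - x0)^2) * hs2 - b 2 * (2 * x - x0) * h1 -
              b 2 * (2 * y - y0) * h2 - b 2 * h3
          simp only [conicEq]
          rw [key, mul_eq_zero]
          exact ⟨fun h => Or.inr h, fun h => h.resolve_left hC⟩
      · have hB : b 1 ≠ 0 := by
          intro h
          rw [hA, hC, h] at hlt
          norm_num at hlt
        apply two_lines_of_factor b 1 0 0 1 x0 y0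
        · norm_num
        · intro x y
          have key : (1 * (x - x0) + 0 * (y - y0)) * (0 * (x - x0) + 1 * (y - y0)) * b 1 =
              b 0 * x^2 + b 1 * (x * y) + b 2 * y^2 + b 3 * x + b 4 * y + b 5 := by
            linear_combination -(2 * x - x0) * h1 - (2 * y - y0) * h2 - h3 -
              (x - x0)^2 * hA - (y - y0)^2 * hC
          simp only [conicEq]
          rw [← key, mul_eq_zero]
          exact ⟨fun h => h.resolve_right hB, fun h => Or.inl h⟩
end
end

section
/- For j = 1, 2 let Kⱼ be the 5×3 real matrix with rows (0,0,1), (0,hⱼ,kⱼ), (0,1,0), (hⱼ,kⱼ,0), (1,0,0), where k₁,h₁,k₂,h₂ ∈ ℝ. Then det(K₁K₁ᵀ + K₂K₂ᵀ) = 2(h₁−h₂)⁴ + 2(h₁−h₂)²(k₁−k₂)² + 2(k₁−k₂)⁴. In particular, if (k₁,h₁) ≠ (k₂,h₂), then det(K₁K₁ᵀ + K₂K₂ᵀ) > 0 and hence λ_min(K₁K₁ᵀ + K₂K₂ᵀ) > 0, where λ_min denotes the smallest eigenvalue. -/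
open MeasureTheory ProbabilityTheory Filter Matrix Finset
open scoped BigOperators NNReal Topology RealInnerProductSpace

noncomputable section

open TwoLinesPaper

lemma lamMin_pos_of_posSemidef_det_ne_zero {n : ℕ} [NeZero n]
    (M : Matrix (Fin n) (Fin n) ℝ) (hM : M.PosSemidef) (hdet : M.det ≠ 0) :
    0 < lamMin M := by
  set f : (Fin n → ℝ) → ℝ := fun u => u ⬝ᵥ M.mulVec u with hf_def
  have hf : Continuous f := by
    have hfe : f = fun u => ∑ i, u i * ∑ j, M i j * u j := by
      funext u; simp [hf_def, Matrix.mulVec, dotProduct]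
    rw [hfe]
    exact continuous_finset_sum _ fun i _ => (continuous_apply i).mul
      (continuous_finset_sum _ fun j _ => continuous_const.mul (continuous_apply j))
  set S : Set (Fin n → ℝ) := {u | ∑ i, u i ^ 2 = 1} with hS_def
  have hSclosed : IsClosed S := by
    have : Continuous fun u : Fin n → ℝ => ∑ i, u i ^ 2 :=
      continuous_finset_sum _ fun i _ => (continuous_apply i).pow 2
    exact isClosed_eq this continuous_const
  have hSbdd : Bornology.IsBounded S := by
    apply Metric.isBounded_closedBall (x := (0 : Fin n → ℝ)) (r := 1) |>.subset
    intro u hu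
    rw [Metric.mem_closedBall, dist_zero_right]
    rw [pi_norm_le_iff_of_nonneg zero_le_one]
    intro i
    have h1 : u i ^ 2 ≤ 1 := by
      have := Finset.single_le_sum (fun j _ => sq_nonneg (u j)) (Finset.mem_univ i)
      rw [hu] at this; exact this
    rw [Real.norm_eq_abs]
    nlinarith [sq_nonneg (|u i| - 1), sq_abs (u i), abs_nonneg (u i)]
  have hScompact : IsCompact S := Metric.isCompact_of_isClosed_isBounded hSclosed hSbdd
  have hSne : S.Nonempty := by
    refine ⟨fun i => if i = 0 then 1 else 0, ?_⟩
    simp [hS_def, Finset.sum_ite_eq', apply_ite (· ^ 2)]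
  have himg : IsCompact (f '' S) := hScompact.image hf
  have hmem : sInf (f '' S) ∈ f '' S := himg.sInf_mem (hSne.image f)
  have hkey : lamMin M = sInf (f '' S) := by
    unfold lamMin
    congr 1
    ext r
    constructor
    · rintro ⟨u, hu, rfl⟩; exact ⟨u, hu, rfl⟩
    · rintro ⟨u, hu, rfl⟩; exact ⟨u, hu, rfl⟩
  rw [hkey]
  obtain ⟨u, hu, hfu⟩ := hmem
  rw [← hfu]
  have hune : u ≠ 0 := by
    intro h
    rw [h] at hu
    simp [hS_def] at hu
  have hnonneg : 0 ≤ f u := by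
    have := hM.dotProduct_mulVec_nonneg u
    simpa using this
  rcases lt_or_eq_of_le hnonneg with h | h
  · exact h
  · exfalso
    have hzero : star u ⬝ᵥ M *ᵥ u = 0 := by simpa using h.symm
    have hMv : M *ᵥ u = 0 := (hM.dotProduct_mulVec_zero_iff u).mp hzero
    have hinj : Function.Injective M.mulVec :=
      Matrix.mulVec_injective_iff_isUnit.mpr (Matrix.isUnit_iff_isUnit_det M |>.mpr
        (isUnit_iff_ne_zero.mpr hdet))
    exact hune (hinj (by rw [hMv, Matrix.mulVec_zero]))

lemma conjT_eq_transpose {m n : ℕ} (A : Matrix (Fin m) (Fin n) ℝ) : Aᴴ = Aᵀ := by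
  ext i j; simp [Matrix.conjTranspose_apply]

set_option maxHeartbeats 4000000 in
/-- the determinant of `K₁K₁ᵀ + K₂K₂ᵀ`. -/
theorem det_KKt_formula (k1 h1 k2 h2 : ℝ)
    (K1 K2 : Matrix (Fin 5) (Fin 3) ℝ)
    (hK1 : K1 = !![0,0,1; 0,h1,k1; 0,1,0; h1,k1,0; 1,0,0])
    (hK2 : K2 = !![0,0,1; 0,h2,k2; 0,1,0; h2,k2,0; 1,0,0]) :
    (K1 * K1ᵀ + K2 * K2ᵀ).det =
      2*(h1 - h2)^4 + 2*(h1 - h2)^2*(k1 - k2)^2 + 2*(k1 - k2)^4 ∧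
    ((k1, h1) ≠ (k2, h2) →
      0 < (K1 * K1ᵀ + K2 * K2ᵀ).det ∧ 0 < lamMin (K1 * K1ᵀ + K2 * K2ᵀ)) := by
  have hMeq : K1 * K1ᵀ + K2 * K2ᵀ =
      !![2, k1+k2, 0, 0, 0;
         k1+k2, h1^2+k1^2+h2^2+k2^2, h1+h2, h1*k1+h2*k2, 0;
         0, h1+h2, 2, k1+k2, 0;
         0, h1*k1+h2*k2, k1+k2, h1^2+k1^2+h2^2+k2^2, h1+h2;
         0, 0, 0, h1+h2, 2] := by
    subst hK1 hK2
    ext i j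
    fin_cases i <;> fin_cases j <;>
      simp [Matrix.mul_apply, Matrix.transpose_apply, Fin.sum_univ_succ,
        Matrix.cons_val_zero, Matrix.cons_val_one, Matrix.head_cons,
        Matrix.vecHead, Matrix.vecTail, Matrix.vecMul, dotProduct] <;> ring
  have hdet : (K1 * K1ᵀ + K2 * K2ᵀ).det =
      2*(h1 - h2)^4 + 2*(h1 - h2)^2*(k1 - k2)^2 + 2*(k1 - k2)^4 := by
    rw [hMeq]
    simp [Matrix.det_succ_row_zero, Fin.sum_univ_succ, Fin.succAbove]
    ring
  refine ⟨hdet, fun hne => ?_⟩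
  have habne : (h1 - h2) ≠ 0 ∨ (k1 - k2) ≠ 0 := by
    by_contra h
    push_neg at h
    exact hne (by
      have h1' : h1 = h2 := by linarith [sub_eq_zero.mp h.1]
      have h2' : k1 = k2 := by linarith [sub_eq_zero.mp h.2]
      rw [h1', h2'])
  have hpos : 0 < (K1 * K1ᵀ + K2 * K2ᵀ).det := by
    rw [hdet]
    rcases habne with h | h
    · nlinarith [sq_nonneg (h1 - h2), sq_nonneg (k1 - k2), pow_pos (pow_pos (abs_pos.mpr h) 1) 1,
        sq_nonneg ((h1-h2)^2), sq_nonneg ((k1-k2)^2), sq_pos_of_ne_zero h]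
    · nlinarith [sq_nonneg (h1 - h2), sq_nonneg (k1 - k2),
        sq_nonneg ((h1-h2)^2), sq_nonneg ((k1-k2)^2), sq_pos_of_ne_zero h]
  refine ⟨hpos, ?_⟩
  have hPSD : (K1 * K1ᵀ + K2 * K2ᵀ).PosSemidef := by
    rw [← conjT_eq_transpose K1, ← conjT_eq_transpose K2]
    exact (Matrix.posSemidef_self_mul_conjTranspose K1).add
      (Matrix.posSemidef_self_mul_conjTranspose K2)
  exact lamMin_pos_of_posSemidef_det_ne_zero _ hPSD hpos.ne'
end
end

section
/- Let k ≠ 0, σ² > 0, σ_ξ² > 0, and r > 0 with r ≠ 1. Set t = (r²k² − 1)·σ_ξ² + (r² − 1)·σ² and k_new = ( t + √( t² + 4r²k²σ_ξ⁴ ) ) / ( 2rkσ_ξ² ). Then k_new ≠ r·k. -/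
open MeasureTheory ProbabilityTheory Filter Matrix Finset
open scoped BigOperators NNReal Topology RealInnerProductSpace

noncomputable section

open TwoLinesPaper
/-- the transformed slope `k_new` differs from `r·k`. -/
theorem k_new_ne_r_mul_k
    (k s2 sx2 r : ℝ) (hk : k ≠ 0) (hs2 : 0 < s2) (hsx2 : 0 < sx2)
    (hr : 0 < r) (hr1 : r ≠ 1)
    (t : ℝ) (ht : t = (r^2*k^2 - 1)*sx2 + (r^2 - 1)*s2) :
    (t + Real.sqrt (t^2 + 4*r^2*k^2*sx2^2)) / (2*r*k*sx2) ≠ r*k := by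
  -- proof
  intro h
  have hden : 2*r*k*sx2 ≠ 0 := by
    have := hr.ne'
    have := hsx2.ne'
    positivity
  have hx : (0:ℝ) ≤ t^2 + 4*r^2*k^2*sx2^2 := by positivity
  have hsq := Real.sq_sqrt hx
  have h2 : Real.sqrt (t^2 + 4*r^2*k^2*sx2^2) = r*k*(2*r*k*sx2) - t := by
    field_simp at h
    linarith
  have h3 : t^2 + 4*r^2*k^2*sx2^2 = (r*k*(2*r*k*sx2) - t)^2 := by
    rw [← hsq, h2]
  have hr2 : r^2 - 1 ≠ 0 := by
    intro hcon
    have hfac : (r - 1) * (r + 1) = 0 := by ring_nf; linarith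
    rcases mul_eq_zero.mp hfac with h' | h'
    · exact hr1 (by linarith)
    · linarith
  have hkey : 4*(r^2*k^2*sx2) * ((r^2-1)*s2) = 0 := by
    subst ht
    nlinarith [h3]
  have : (r^2*k^2*sx2) * ((r^2-1)*s2) ≠ 0 := by
    apply mul_ne_zero
    · positivity
    · exact mul_ne_zero hr2 hs2.ne'
  apply this
  linarith
end
end
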